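/- Let ε > 0. For r ∈ ℝ let μ_r denote the probability measure on ℝ with density x ↦ (ε/2)·exp(−ε·|x − r|) with respect to Lebesgue measure (the Laplace distribution with scale 1/ε centered at r). Then for all r, r' ∈ ℝ and every Borel measurable set O ⊆ ℝ, μ_r(O) ≤ exp(ε·|r − r'|)·μ_{r'}(O). -/
import Mathlib


open MeasureTheory

/-- The Laplace distribution on `ℝ` with scale `1/ε` centered at `r`: the measure with
density `x ↦ (ε/2) * exp (−ε * |x − r|)` with respect to Lebesgue measure. -/
noncomputable def laplaceMeasureAt (ε r : ℝ) : Measure ℝ :=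
  MeasureTheory.volume.withDensity
    (fun x => ENNReal.ofReal ((ε / 2) * Real.exp (-ε * |x - r|)))

/-- **Differential privacy of the scalar Laplace mechanism**: for `ε > 0`, all
`r, r' ∈ ℝ` and every Borel set `O ⊆ ℝ`,
`μ_r(O) ≤ exp(ε |r − r'|) · μ_{r'}(O)`, where `μ_r = r + Lap(1/ε)`. -/
theorem laplace_mechanism_DP (ε : ℝ) (hε : 0 < ε) (r r' : ℝ)
    (O : Set ℝ) (hO : MeasurableSet O) :
    laplaceMeasureAt ε r O ≤
      ENNReal.ofReal (Real.exp (ε * |r - r'|)) * laplaceMeasureAt ε r' O := by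
  rw [laplaceMeasureAt, laplaceMeasureAt, withDensity_apply _ hO, withDensity_apply _ hO,
    ← MeasureTheory.lintegral_const_mul' _ _ ENNReal.ofReal_ne_top]
  refine MeasureTheory.lintegral_mono fun x => ?_
  rw [← ENNReal.ofReal_mul (Real.exp_nonneg _)]
  apply ENNReal.ofReal_le_ofReal
  have htri : |x - r'| ≤ |x - r| + |r - r'| := abs_sub_le x r r'
  have hexp : Real.exp (-ε * |x - r|) ≤ Real.exp (ε * |r - r'| + -ε * |x - r'|) := by
    apply Real.exp_le_exp.mpr
    nlinarith
  calc ε / 2 * Real.exp (-ε * |x - r|)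
      ≤ ε / 2 * Real.exp (ε * |r - r'| + -ε * |x - r'|) := by
        exact mul_le_mul_of_nonneg_left hexp (by linarith)
    _ = Real.exp (ε * |r - r'|) * (ε / 2 * Real.exp (-ε * |x - r'|)) := by
        rw [Real.exp_add]; ring
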